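/- arXiv:2605.18089 — 6 statements merged into one kernel-verified Lean document; each statement's English description precedes it below -/
import Mathlib

section
/- Let b ≥ 1 be an integer and let τ ∈ ℂ with Im τ > 0. The b functions f_l : ℂ → ℂ, f_l(z) = θ[l/b, 0](z, τ) for l = 0, 1, …, b−1, are linearly independent over ℂ. -/
open Complex

/-- The theta function with characteristics `a, b`. -/
noncomputable def thetaChar (a b : ℝ) (z τ : ℂ) : ℂ :=
  ∑' n : ℤ, Complex.exp (Real.pi * Complex.I * ((n : ℂ) + a) ^ 2 * τ +
    2 * Real.pi * Complex.I * ((n : ℂ) + a) * (z + b))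

open MeasureTheory

lemma exp_int_two_pi (k : ℤ) : Complex.exp (2 * (Real.pi:ℂ) * Complex.I * k) = 1 := by
  rw [show 2 * (Real.pi:ℂ) * Complex.I * k = (k:ℂ) * (2 * Real.pi * Complex.I) by ring]
  exact Complex.exp_int_mul_two_pi_mul_I k

lemma fourier_coeffs_eq_zero (a : ℤ → ℂ) (ha : Summable fun n => ‖a n‖)
    (h : ∀ x : ℝ, ∑' n : ℤ, a n * Complex.exp (2 * Real.pi * Complex.I * n * x) = 0)
    (m : ℤ) : a m = 0 := by
  set c : ℤ → ℂ := fun n => 2 * Real.pi * Complex.I * ((n : ℂ) - m) with hcdef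
  set F : ℤ → ℝ → ℂ := fun n x => a n * Complex.exp (c n * x) with hF
  have hnorm : ∀ n (x : ℝ), ‖F n x‖ = ‖a n‖ := by
    intro n x
    have h1 : c n * x = ((2 * Real.pi * ((n:ℝ) - m) * x : ℝ) : ℂ) * Complex.I := by
      simp only [hcdef]; push_cast; ring
    simp only [hF, norm_mul]
    rw [h1, Complex.norm_exp_ofReal_mul_I, mul_one]
  have hcont : ∀ n, Continuous (F n) := fun n =>
    continuous_const.mul (Complex.continuous_exp.comp (continuous_const.mul Complex.continuous_ofReal))
  have hint : ∀ n, IntegrableOn (F n) (Set.Ioc (0:ℝ) 1) := fun n => (hcont n).integrableOn_Ioc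
  have hsum : Summable fun n => ∫ x in Set.Ioc (0:ℝ) 1, ‖F n x‖ := by
    have : (fun n => ∫ x in Set.Ioc (0:ℝ) 1, ‖F n x‖) = fun n => ‖a n‖ := by
      funext n
      simp_rw [hnorm]
      simp [Real.volume_Ioc]
    rw [this]; exact ha
  have hswap := integral_tsum_of_summable_integral_norm
      (μ := (volume : Measure ℝ).restrict (Set.Ioc (0:ℝ) 1)) hint hsum
  have hzero : ∀ x : ℝ, ∑' n, F n x = 0 := by
    intro x
    have h1 : ∀ n : ℤ, F n x = (a n * Complex.exp (2 * Real.pi * Complex.I * n * x)) *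
        Complex.exp (-(2 * Real.pi * Complex.I * m * x)) := by
      intro n
      simp only [hF, hcdef, mul_assoc, ← Complex.exp_add]
      ring_nf
    simp_rw [h1]
    rw [tsum_mul_right, h x, zero_mul]
  have hI : ∀ n : ℤ, ∫ x in Set.Ioc (0:ℝ) 1, F n x = if n = m then a m else 0 := by
    intro n
    rw [← intervalIntegral.integral_of_le (zero_le_one)]
    by_cases hnm : n = m
    · subst hnm
      simp [hF, hcdef]
    · have hc0 : c n ≠ 0 := by
        simp only [hcdef]
        refine mul_ne_zero (mul_ne_zero (mul_ne_zero two_ne_zero ?_) Complex.I_ne_zero) ?_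
        · exact_mod_cast Real.pi_ne_zero
        · rw [sub_ne_zero]
          exact_mod_cast hnm
      have hcval : c n = ((n - m : ℤ) : ℂ) * (2 * Real.pi * Complex.I) := by
        simp only [hcdef]; push_cast; ring
      have he1 : Complex.exp (c n) = 1 := by
        rw [hcval]; exact Complex.exp_int_mul_two_pi_mul_I (n - m)
      simp only [hF]
      rw [intervalIntegral.integral_const_mul, integral_exp_mul_complex hc0,
        Complex.ofReal_one, Complex.ofReal_zero, mul_one, mul_zero, Complex.exp_zero, he1]
      simp [hnm]
  calc a m = ∑' n : ℤ, (if n = m then a m else 0) := (tsum_ite_eq m (fun _ => a m)).symm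
    _ = ∑' n : ℤ, ∫ x in Set.Ioc (0:ℝ) 1, F n x := tsum_congr fun n => (hI n).symm
    _ = ∫ x in Set.Ioc (0:ℝ) 1, ∑' n, F n x := hswap
    _ = 0 := by simp_rw [hzero]; simp


/-- The `b` functions `z ↦ θ[l/b, 0](z, τ)`, `l = 0, …, b−1`, are linearly
independent over `ℂ`. -/
theorem thetaChar_div_linearIndependent (b : ℕ) (hb : 1 ≤ b) (τ : ℂ) (hτ : 0 < τ.im) :
    LinearIndependent ℂ
      (fun l : Fin b => (fun z : ℂ => thetaChar (((l : ℕ) : ℝ) / (b : ℝ)) 0 z τ)) := by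
  haveI : NeZero b := ⟨by omega⟩
  have hb0 : ((b:ℕ):ℂ) ≠ 0 := by
    exact_mod_cast Nat.cast_ne_zero.mpr (by omega : b ≠ 0)
  set e := Int.divModEquiv b with he
  set τ' : ℂ := τ / ((b:ℂ))^2 with hτ'def
  have hτ'im : 0 < τ'.im := by
    rw [hτ'def, show ((b:ℂ))^2 = (((b:ℝ)^2 : ℝ) : ℂ) by push_cast; ring,
      Complex.div_ofReal_im]
    have : (0:ℝ) < (b:ℝ)^2 := by positivity
    positivity
  rw [Fintype.linearIndependent_iff]
  intro c hc l0
  set A : ℤ → ℂ := fun m =>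
    c (e m).2 * Complex.exp (Real.pi * Complex.I * ((m:ℂ)/(b:ℂ))^2 * τ) with hA
  have hAterm : ∀ m : ℤ,
      Complex.exp (Real.pi * Complex.I * ((m:ℂ)/(b:ℂ))^2 * τ) = jacobiTheta₂_term m 0 τ' := by
    intro m
    rw [jacobiTheta₂_term]
    congr 1
    rw [hτ'def]
    field_simp
    ring
  have hjt : Summable fun m : ℤ => ‖jacobiTheta₂_term m 0 τ'‖ := by
    have hs := summable_pow_mul_jacobiTheta₂_term_bound 0 hτ'im 0
    simp only [pow_zero, one_mul] at hs
    refine Summable.of_nonneg_of_le (fun n => norm_nonneg _) (fun n => ?_) hs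
    have h2 := norm_jacobiTheta₂_term_le hτ'im (S := 0) (τ := τ') (z := 0) (by simp) le_rfl n
    simpa [Int.cast_abs] using h2
  have hAnorm : Summable fun m : ℤ => ‖A m‖ := by
    apply Summable.of_nonneg_of_le (fun n => norm_nonneg _) ?_
      (hjt.mul_left (∑ l : Fin b, ‖c l‖))
    intro n
    rw [hA]
    simp only []
    rw [hAterm, norm_mul]
    apply mul_le_mul_of_nonneg_right ?_ (norm_nonneg _)
    exact Finset.single_le_sum (f := fun l => ‖c l‖) (fun i _ => norm_nonneg _)
      (Finset.mem_univ _)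
  have h1 : ∀ x : ℝ, ∑' m : ℤ, A m * Complex.exp (2 * Real.pi * Complex.I * m * x) = 0 := by
    intro x
    set g : ℤ → ℂ := fun m => A m * Complex.exp (2 * Real.pi * Complex.I * m * x) with hg
    have hgnorm : ∀ m, ‖g m‖ = ‖A m‖ := by
      intro m
      have h2 : 2 * (Real.pi:ℂ) * Complex.I * m * x
          = ((2 * Real.pi * (m:ℝ) * x : ℝ) : ℂ) * Complex.I := by push_cast; ring
      simp only [hg, norm_mul]
      rw [h2, Complex.norm_exp_ofReal_mul_I, mul_one]
    have hgsum : Summable g := by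
      apply Summable.of_norm
      have : (fun m => ‖g m‖) = fun m => ‖A m‖ := funext hgnorm
      rw [this]; exact hAnorm
    have key : ∀ p : ℤ × Fin b, g (e.symm p) =
        c p.2 * Complex.exp (Real.pi * Complex.I *
            ((p.1:ℂ) + ((((p.2:ℕ):ℝ) / (b:ℝ) : ℝ) : ℂ)) ^ 2 * τ +
          2 * Real.pi * Complex.I * ((p.1:ℂ) + ((((p.2:ℕ):ℝ) / (b:ℝ) : ℝ) : ℂ)) *
            ((b:ℂ) * x + ((0:ℝ):ℂ))) := by
      rintro ⟨n, l⟩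
      have hm : ((e.symm (n, l) : ℤ) : ℂ) = (n:ℂ) * b + ((l:ℕ):ℂ) := by
        rw [he, Int.divModEquiv_symm_apply]
        push_cast
        ring
      have hexp : Real.pi * Complex.I * (((e.symm (n, l) : ℤ) : ℂ) / (b:ℂ)) ^ 2 * τ
            + 2 * Real.pi * Complex.I * ((e.symm (n, l) : ℤ) : ℂ) * (x:ℂ)
          = Real.pi * Complex.I * ((n:ℂ) + ((((l:ℕ):ℝ) / (b:ℝ) : ℝ) : ℂ)) ^ 2 * τ
            + 2 * Real.pi * Complex.I * ((n:ℂ) + ((((l:ℕ):ℝ) / (b:ℝ) : ℝ) : ℂ)) *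
              ((b:ℂ) * x + ((0:ℝ):ℂ)) := by
        rw [hm]
        push_cast
        field_simp
        ring
      simp only [hg, hA, Equiv.apply_symm_apply]
      rw [mul_assoc, ← Complex.exp_add, hexp]
    have hgsum' : Summable (g ∘ e.symm) := (Equiv.summable_iff e.symm).mpr hgsum
    have hslice : ∀ l : Fin b, Summable fun n : ℤ => g (e.symm (n, l)) := by
      intro l
      have hinj : Function.Injective (fun n : ℤ => e.symm (n, l)) := by
        intro n1 n2 h12
        have := congrArg (fun q => (e q).1) h12
        simpa using this
      exact hgsum.comp_injective hinj
    have hcz := congrFun hc ((b:ℂ) * x)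
    simp only [Finset.sum_apply, Pi.smul_apply, smul_eq_mul, Pi.zero_apply] at hcz
    calc ∑' m : ℤ, g m = ∑' p : ℤ × Fin b, g (e.symm p) := (Equiv.tsum_eq e.symm g).symm
      _ = ∑' n : ℤ, ∑' l : Fin b, g (e.symm (n, l)) :=
            Summable.tsum_prod' hgsum' fun n => Summable.of_finite
      _ = ∑' n : ℤ, ∑ l : Fin b, g (e.symm (n, l)) := tsum_congr fun n => tsum_fintype _
      _ = ∑ l : Fin b, ∑' n : ℤ, g (e.symm (n, l)) := Summable.tsum_finsetSum fun l _ => hslice l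
      _ = ∑ l : Fin b, c l * thetaChar (((l:ℕ):ℝ) / (b:ℝ)) 0 ((b:ℂ) * x) τ := by
          refine Finset.sum_congr rfl fun l _ => ?_
          rw [thetaChar, ← tsum_mul_left]
          exact tsum_congr fun n => key (n, l)
      _ = 0 := hcz
  have hA0 := fourier_coeffs_eq_zero A hAnorm h1 (e.symm (0, l0))
  rw [hA] at hA0
  simp only [Equiv.apply_symm_apply] at hA0
  exact (mul_eq_zero.mp hA0).resolve_right (Complex.exp_ne_zero _)
end

section
/- Let b ≥ 1, n ≥ 1, m ≥ 0 be integers, 0 ≤ l ≤ b−1, τ ∈ ℂ with Im τ > 0, z ∈ ℂⁿ, w ∈ ℂᵐ, and 1 ≤ γ ≤ m. Then shifting the quasihole coordinate w_γ by 1 multiplies the genus-one Laughlin section by a constant phase: S_l(z | w + e_γ) = (−1)ⁿ · exp(2πil/b) · S_l(z | w), where e_γ denotes the γ-th standard basis vector of ℂᵐ. -/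
open Complex BigOperators Finset

/-- The first Jacobi theta function `θ₁(z,τ) = θ[1/2,1/2](z,τ)`. -/
noncomputable def theta1 (z τ : ℂ) : ℂ := thetaChar (1/2) (1/2) z τ

/-- The genus-one Laughlin section with `n` particles and `m` quasiholes:
`S_l(z|w) = θ[l/b,0](b Σ z_μ + Σ w_γ, bτ) · Π_{μ<ν} θ₁(z_μ−z_ν,τ)^b · Π_{μ,γ} θ₁(z_μ−w_γ,τ)`. -/
noncomputable def laughlinS (b n m : ℕ) (l : ℕ) (τ : ℂ)
    (z : Fin n → ℂ) (w : Fin m → ℂ) : ℂ :=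
  thetaChar ((l : ℝ) / (b : ℝ)) 0 ((b : ℂ) * ∑ μ, z μ + ∑ γ, w γ) ((b : ℂ) * τ) *
    (∏ μ : Fin n, ∏ ν ∈ Finset.Ioi μ, (theta1 (z μ - z ν) τ) ^ b) *
    ∏ μ : Fin n, ∏ γ : Fin m, theta1 (z μ - w γ) τ

lemma thetaChar_add_one (a b : ℝ) (z τ : ℂ) :
    thetaChar a b (z + 1) τ =
      Complex.exp (2 * Real.pi * Complex.I * (a : ℂ)) * thetaChar a b z τ := by
  unfold thetaChar
  rw [← tsum_mul_left]
  congr 1 with k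
  have h : (Real.pi : ℂ) * Complex.I * ((k : ℂ) + a) ^ 2 * τ +
      2 * Real.pi * Complex.I * ((k : ℂ) + a) * (z + 1 + b) =
      2 * Real.pi * Complex.I * (a : ℂ) + (k : ℂ) * (2 * Real.pi * Complex.I) +
      ((Real.pi : ℂ) * Complex.I * ((k : ℂ) + a) ^ 2 * τ +
        2 * Real.pi * Complex.I * ((k : ℂ) + a) * (z + b)) := by ring
  rw [h, Complex.exp_add, Complex.exp_add, Complex.exp_int_mul_two_pi_mul_I, mul_one]

lemma theta1_sub_one (z τ : ℂ) : theta1 (z - 1) τ = - theta1 z τ := by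
  have h := thetaChar_add_one (1/2) (1/2) (z - 1) τ
  rw [sub_add_cancel] at h
  have he : Complex.exp (2 * Real.pi * Complex.I * ((1/2 : ℝ) : ℂ)) = -1 := by
    have : 2 * (Real.pi : ℂ) * Complex.I * ((1/2 : ℝ) : ℂ) = Real.pi * Complex.I := by
      push_cast; ring
    rw [this, Complex.exp_pi_mul_I]
  rw [he] at h
  unfold theta1
  rw [h]; ring

/-- Shifting one quasihole coordinate by `1` multiplies the genus-one Laughlin
section by the constant phase `(−1)ⁿ · exp(2πil/b)`. -/
theorem laughlinS_shift_one (b n m : ℕ) (hb : 1 ≤ b) (hn : 1 ≤ n) (l : ℕ) (hl : l ≤ b - 1)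
    (τ : ℂ) (hτ : 0 < τ.im) (z : Fin n → ℂ) (w : Fin m → ℂ) (γ : Fin m) :
    laughlinS b n m l τ z (w + Pi.single γ 1) =
      (-1 : ℂ) ^ n * Complex.exp (2 * Real.pi * Complex.I * (l : ℂ) / (b : ℂ)) *
        laughlinS b n m l τ z w := by
  unfold laughlinS
  set w' : Fin m → ℂ := w + Pi.single γ 1 with hw'
  have hsum : ∑ δ : Fin m, w' δ = (∑ δ : Fin m, w δ) + 1 := by
    simp [hw', Finset.sum_add_distrib, Finset.sum_pi_single']
  have hkey : ∀ μ : Fin n, (∏ δ : Fin m, theta1 (z μ - w' δ) τ)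
      = -∏ δ : Fin m, theta1 (z μ - w δ) τ := by
    intro μ
    have hterm : ∀ δ : Fin m, theta1 (z μ - w' δ) τ =
        (if δ = γ then (-1 : ℂ) else 1) * theta1 (z μ - w δ) τ := by
      intro δ
      by_cases h : δ = γ
      · subst h
        have h2 : z μ - w' δ = (z μ - w δ) - 1 := by
          simp [hw']; ring
        rw [h2, theta1_sub_one]; simp
      · have h2 : w' δ = w δ := by simp [hw', Pi.single_eq_of_ne h]
        simp [h2, h]
    rw [Finset.prod_congr rfl (fun δ _ => hterm δ), Finset.prod_mul_distrib]
    simp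
  have htheta : thetaChar ((l : ℝ) / (b : ℝ)) 0
      ((b : ℂ) * ∑ μ, z μ + ∑ δ, w' δ) ((b : ℂ) * τ) =
      Complex.exp (2 * Real.pi * Complex.I * (l : ℂ) / (b : ℂ)) *
        thetaChar ((l : ℝ) / (b : ℝ)) 0 ((b : ℂ) * ∑ μ, z μ + ∑ δ, w δ) ((b : ℂ) * τ) := by
    rw [hsum, ← add_assoc, thetaChar_add_one]
    congr 2
    have hb0 : (b : ℂ) ≠ 0 := Nat.cast_ne_zero.mpr (by omega)
    push_cast
    field_simp
  have hprod : (∏ μ : Fin n, ∏ δ : Fin m, theta1 (z μ - w' δ) τ)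
      = (-1 : ℂ) ^ n * ∏ μ : Fin n, ∏ δ : Fin m, theta1 (z μ - w δ) τ := by
    rw [Finset.prod_congr rfl (fun μ _ => hkey μ)]
    have : ∀ μ : Fin n, (-∏ δ : Fin m, theta1 (z μ - w δ) τ) =
        (-1 : ℂ) * ∏ δ : Fin m, theta1 (z μ - w δ) τ := fun μ => by ring
    rw [Finset.prod_congr rfl (fun μ _ => this μ), Finset.prod_mul_distrib,
      Finset.prod_const, Finset.card_univ, Fintype.card_fin]
  rw [htheta, hprod]
  ring
end

section
/- Let b ≥ 1, n ≥ 1, m ≥ 1 be integers, 0 ≤ l ≤ b−1, τ ∈ ℂ with Im τ > 0, z ∈ ℂⁿ, w ∈ ℂᵐ, and 1 ≤ γ ≤ m. Then shifting the quasihole coordinate w_γ by τ sends the genus-one Laughlin section S_l to a multiple of S_{l+1}: S_l(z | w + τ·e_γ) = (−1)ⁿ · exp(−πiτ(n + 1/b) − 2πi(n·w_γ + (1/b)·Σ_{δ=1}^m w_δ)) · S_{l+1}(z | w), where e_γ is the γ-th standard basis vector of ℂᵐ and S_b is interpreted as the section built from θ[b/b, 0] = θ[1,0] (which equals θ[0,0],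 so S_b = S_0). -/
open Complex BigOperators Finset

lemma thetaChar_shift (a b' c : ℝ) (z τ : ℂ) :
    thetaChar a b' (z + c * τ) τ =
      Complex.exp (-(Real.pi * Complex.I * c ^ 2 * τ) - 2 * Real.pi * Complex.I * c * (z + b')) *
        thetaChar (a + c) b' z τ := by
  unfold thetaChar
  rw [← tsum_mul_left]
  refine tsum_congr fun n => ?_
  rw [← Complex.exp_add]
  congr 1
  push_cast
  ring

lemma thetaChar_a_add_one (a b' : ℝ) (z τ : ℂ) :
    thetaChar (a + 1) b' z τ = thetaChar a b' z τ := by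
  unfold thetaChar
  rw [← (Equiv.addRight (1 : ℤ)).tsum_eq (fun n : ℤ => Complex.exp
      (Real.pi * Complex.I * ((n : ℂ) + a) ^ 2 * τ +
        2 * Real.pi * Complex.I * ((n : ℂ) + a) * (z + b')))]
  refine tsum_congr fun n => ?_
  simp only [Equiv.coe_addRight]
  congr 2 <;> push_cast <;> ring

lemma theta1_sub_tau (u τ : ℂ) :
    theta1 (u - τ) τ = -Complex.exp (-(Real.pi * Complex.I * τ) + 2 * Real.pi * Complex.I * u) *
      theta1 u τ := by
  have h := thetaChar_shift (1/2) (1/2) (-1) u τ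
  rw [show u + ((-1:ℝ):ℂ) * τ = u - τ by push_cast; ring] at h
  rw [show ((1:ℝ)/2) + (-1) = (-1/2 : ℝ) by norm_num] at h
  have h2 := thetaChar_a_add_one (-1/2) (1/2) u τ
  rw [show (-1/2 : ℝ) + 1 = (1/2 : ℝ) by norm_num] at h2
  rw [theta1, theta1, h, ← h2]
  congr 1
  rw [show -(↑Real.pi * I * (((-1:ℝ)):ℂ) ^ 2 * τ) - 2 * ↑Real.pi * I * (((-1:ℝ)):ℂ) * (u + ((1/2:ℝ):ℂ)) =
    (-(↑Real.pi * I * τ) + 2 * ↑Real.pi * I * u) + ↑Real.pi * I by push_cast; ring]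
  rw [Complex.exp_add, Complex.exp_pi_mul_I]
  ring

/-- Shifting one quasihole coordinate by `τ` sends `S_l` to an explicit multiple of
`S_{l+1}` (with `S_b = S_0`, since it is built from `θ[b/b,0] = θ[1,0] = θ[0,0]`). -/
theorem laughlinS_shift_tau (b n m : ℕ) (hb : 1 ≤ b) (hn : 1 ≤ n) (hm : 1 ≤ m)
    (l : ℕ) (hl : l ≤ b - 1) (τ : ℂ) (hτ : 0 < τ.im)
    (z : Fin n → ℂ) (w : Fin m → ℂ) (γ : Fin m) :
    laughlinS b n m l τ z (w + Pi.single γ τ) =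
      (-1 : ℂ) ^ n *
        Complex.exp (-(Real.pi * Complex.I * τ * ((n : ℂ) + 1 / (b : ℂ)))
          - 2 * Real.pi * Complex.I * ((n : ℂ) * w γ + (1 / (b : ℂ)) * ∑ δ, w δ)) *
        laughlinS b n m (l + 1) τ z w := by
  have hb0 : (b : ℂ) ≠ 0 := Nat.cast_ne_zero.mpr (by omega)
  unfold laughlinS
  have hw : ∑ δ, (w + Pi.single γ τ : Fin m → ℂ) δ = (∑ δ, w δ) + τ := by
    simp [Finset.sum_add_distrib, Finset.sum_pi_single']
  rw [hw]
  set Z : ℂ := (b : ℂ) * ∑ μ, z μ + ∑ δ, w δ with hZ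
  rw [show (b : ℂ) * ∑ μ, z μ + ((∑ δ, w δ) + τ) = Z + τ by rw [hZ]; ring]
  -- first factor
  have h1 : thetaChar ((l : ℝ) / b) 0 (Z + τ) ((b : ℂ) * τ)
      = Complex.exp (-(Real.pi * I * (((1:ℝ)/b : ℝ) : ℂ) ^ 2 * ((b : ℂ) * τ))
          - 2 * Real.pi * I * (((1:ℝ)/b : ℝ) : ℂ) * (Z + ((0:ℝ) : ℂ))) *
        thetaChar (((l + 1 : ℕ) : ℝ) / b) 0 Z ((b : ℂ) * τ) := by
    have h := thetaChar_shift ((l : ℝ) / b) 0 ((1:ℝ)/b) Z ((b : ℂ) * τ)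
    rw [show Z + ((((1:ℝ)/b : ℝ)) : ℂ) * ((b : ℂ) * τ) = Z + τ by push_cast; field_simp] at h
    rw [show (l : ℝ) / b + (1:ℝ)/b = ((l + 1 : ℕ) : ℝ) / b by push_cast; ring] at h
    exact h
  rw [h1]
  -- third factor
  have h3 : ∀ μ : Fin n, ∏ δ, theta1 (z μ - (w + Pi.single γ τ : Fin m → ℂ) δ) τ
      = ((-1 : ℂ) * Complex.exp (-(Real.pi * I * τ) + 2 * Real.pi * I * (z μ - w γ))) *
        ∏ δ, theta1 (z μ - w δ) τ := by
    intro μ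
    rw [← Finset.mul_prod_erase Finset.univ _ (Finset.mem_univ γ),
      ← Finset.mul_prod_erase Finset.univ (fun δ => theta1 (z μ - w δ) τ) (Finset.mem_univ γ)]
    have e1 : theta1 (z μ - (w + Pi.single γ τ : Fin m → ℂ) γ) τ
        = (-1 : ℂ) * Complex.exp (-(Real.pi * I * τ) + 2 * Real.pi * I * (z μ - w γ)) *
          theta1 (z μ - w γ) τ := by
      have : z μ - (w + Pi.single γ τ : Fin m → ℂ) γ = (z μ - w γ) - τ := by
        simp [Pi.single_eq_same]; ring
      rw [this, theta1_sub_tau]; ring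
    have e2 : ∏ δ ∈ Finset.univ.erase γ, theta1 (z μ - (w + Pi.single γ τ : Fin m → ℂ) δ) τ
        = ∏ δ ∈ Finset.univ.erase γ, theta1 (z μ - w δ) τ := by
      refine Finset.prod_congr rfl fun δ hδ => ?_
      rw [Pi.add_apply, Pi.single_eq_of_ne (Finset.ne_of_mem_erase hδ), add_zero]
    rw [e1, e2]; ring
  rw [Finset.prod_congr rfl fun μ _ => h3 μ, Finset.prod_mul_distrib,
    Finset.prod_mul_distrib, Finset.prod_const, ← Complex.exp_sum]
  have hsum : ∑ μ : Fin n, (-(Real.pi * I * τ) + 2 * Real.pi * I * (z μ - w γ))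
      = (n : ℂ) * (-(Real.pi * I * τ) - 2 * Real.pi * I * w γ) + 2 * Real.pi * I * ∑ μ, z μ := by
    have : ∀ μ : Fin n, (-(Real.pi * I * τ) + 2 * Real.pi * I * (z μ - w γ))
        = (-(Real.pi * I * τ) - 2 * ↑Real.pi * I * w γ) + 2 * Real.pi * I * z μ := fun μ => by ring
    rw [Finset.sum_congr rfl fun μ _ => this μ, Finset.sum_add_distrib, Finset.sum_const,
      ← Finset.mul_sum]
    simp [nsmul_eq_mul]
  rw [hsum]
  simp only [Finset.card_univ, Fintype.card_fin]
  have hexp : Complex.exp (-(Real.pi * I * (((1:ℝ)/b : ℝ) : ℂ) ^ 2 * ((b : ℂ) * τ))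
          - 2 * Real.pi * I * (((1:ℝ)/b : ℝ) : ℂ) * (Z + ((0:ℝ) : ℂ))) *
      Complex.exp ((n : ℂ) * (-(Real.pi * I * τ) - 2 * Real.pi * I * w γ)
          + 2 * Real.pi * I * ∑ μ, z μ)
      = Complex.exp (-(Real.pi * I * τ * ((n : ℂ) + 1 / (b : ℂ)))
          - 2 * Real.pi * I * ((n : ℂ) * w γ + (1 / (b : ℂ)) * ∑ δ, w δ)) := by
    rw [← Complex.exp_add]
    congr 1
    rw [hZ]
    push_cast
    field_simp
    ring
  set T := thetaChar (((l + 1 : ℕ) : ℝ) / b) 0 Z ((b : ℂ) * τ)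
  set P2 := ∏ μ : Fin n, ∏ ν ∈ Finset.Ioi μ, (theta1 (z μ - z ν) τ) ^ b
  set P3 := ∏ μ : Fin n, ∏ δ : Fin m, theta1 (z μ - w δ) τ
  linear_combination ((-1 : ℂ)) ^ n * T * P2 * P3 * hexp
end

section
/- Let R be a commutative ring, let n ≥ 1, and let K be an n × n matrix over R. In the exterior algebra of the free R-module with basis {ψ̄_1, …, ψ̄_n, ψ_1, …, ψ_n}, one has (Σ_{i,j} K_{ij} · ψ̄_i ∧ ψ_j)^n = n! · det(K) · (ψ̄_1 ∧ ψ_1 ∧ ψ̄_2 ∧ ψ_2 ∧ ⋯ ∧ ψ̄_n ∧ ψ_n). -/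
open BigOperators Finset

section Helpers

variable {R : Type*} [CommRing R] {A : Type*} [Ring A] [Algebra R A]

private lemma sum_pow_ofFn {ι : Type*} [Fintype ι] [DecidableEq ι] (a : ι → A) :
    ∀ m : ℕ, (∑ j, a j) ^ m = ∑ f : Fin m → ι, (List.ofFn fun k => a (f k)).prod := by
  intro m
  induction m with
  | zero => simp
  | succ m ih =>
    calc (∑ j, a j) ^ (m + 1)
        = (∑ j, a j) * (∑ f : Fin m → ι, (List.ofFn fun k => a (f k)).prod) := by
          rw [pow_succ', ih]
      _ = ∑ j, ∑ f : Fin m → ι, a j * (List.ofFn fun k => a (f k)).prod := by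
          rw [Finset.sum_mul_sum]
      _ = ∑ p : ι × (Fin m → ι), a p.1 * (List.ofFn fun k => a (p.2 k)).prod := by
          rw [Fintype.sum_prod_type]
      _ = ∑ f : Fin (m+1) → ι, (List.ofFn fun k => a (f k)).prod := by
          refine Fintype.sum_equiv (Fin.consEquiv fun _ => ι) _ _ (fun p => ?_)
          simp [Fin.consEquiv, List.ofFn_succ]

private lemma mul_list_prod_anticomm (b : A) :
    ∀ l : List A, (∀ a ∈ l, a * b = -(b * a)) →
      b * l.prod = ((-1 : ℤ) ^ l.length) • (l.prod * b) := by
  intro l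
  induction l with
  | nil => simp
  | cons a l ih =>
    intro h
    have hba : b * a = -(a * b) := by rw [h a List.mem_cons_self, neg_neg]
    have hl := ih (fun x hx => h x (List.mem_cons_of_mem _ hx))
    calc b * (a :: l).prod = (b * a) * l.prod := by rw [List.prod_cons, mul_assoc]
      _ = -(a * (b * l.prod)) := by rw [hba, neg_mul, mul_assoc]
      _ = -(a * (((-1 : ℤ) ^ l.length) • (l.prod * b))) := by rw [hl]
      _ = ((-1 : ℤ) ^ (a :: l).length) • ((a :: l).prod * b) := by
          rw [mul_smul_comm, ← neg_smul, List.length_cons, List.prod_cons,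
            pow_succ, mul_assoc]
          congr 1
          simp

private lemma prod_ofFn_mul_anticomm :
    ∀ (m : ℕ) (a b : Fin m → A), (∀ k l, a k * b l = -(b l * a k)) →
    (List.ofFn fun k => a k * b k).prod
      = ((-1 : ℤ) ^ m.choose 2) • ((List.ofFn a).prod * (List.ofFn b).prod) := by
  intro m
  induction m with
  | zero => intro a b _; simp
  | succ m ih =>
    intro a b h
    have ih' := ih (fun k => a k.succ) (fun k => b k.succ) (fun k l => h _ _)
    have hmove : b 0 * (List.ofFn fun k : Fin m => a k.succ).prod
        = ((-1 : ℤ) ^ m) • ((List.ofFn fun k : Fin m => a k.succ).prod * b 0) := by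
      have := mul_list_prod_anticomm (b 0) (List.ofFn fun k : Fin m => a k.succ)
        (fun x hx => by
          obtain ⟨k, rfl⟩ := List.mem_ofFn.1 hx
          exact h _ _)
      simpa using this
    have hc : (m+1).choose 2 = m + m.choose 2 := by
      rw [Nat.choose_succ_succ, Nat.choose_one_right]
    rw [List.ofFn_succ (f := fun k => a k * b k), List.ofFn_succ (f := a),
      List.ofFn_succ (f := b), List.prod_cons, List.prod_cons, List.prod_cons]
    calc (a 0 * b 0) * (List.ofFn fun k : Fin m => a k.succ * b k.succ).prod
        = (a 0 * b 0) * (((-1 : ℤ) ^ m.choose 2) •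
            ((List.ofFn fun k : Fin m => a k.succ).prod *
             (List.ofFn fun k : Fin m => b k.succ).prod)) := by rw [ih']
      _ = ((-1 : ℤ) ^ m.choose 2) • (a 0 * ((b 0 *
            (List.ofFn fun k : Fin m => a k.succ).prod) *
             (List.ofFn fun k : Fin m => b k.succ).prod)) := by
          rw [mul_smul_comm]; congr 1; rw [mul_assoc, ← mul_assoc (b 0)]
      _ = ((-1 : ℤ) ^ ((m+1).choose 2)) • ((a 0 *
            (List.ofFn fun k : Fin m => a k.succ).prod) *
            (b 0 * (List.ofFn fun k : Fin m => b k.succ).prod)) := by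
          rw [hmove, smul_mul_assoc, mul_smul_comm, smul_smul, hc, pow_add]
          congr 1
          · ring
          · simp [mul_assoc]

private lemma prod_ofFn_smul :
    ∀ (m : ℕ) (c : Fin m → R) (y : Fin m → A),
    (List.ofFn fun k => c k • y k).prod = (∏ k, c k) • (List.ofFn y).prod := by
  intro m
  induction m with
  | zero => intro c y; simp
  | succ m ih =>
    intro c y
    rw [List.ofFn_succ (f := fun k => c k • y k), List.ofFn_succ (f := y),
      List.prod_cons, List.prod_cons, ih, Fin.prod_univ_succ,
      smul_mul_assoc, mul_smul_comm, smul_smul]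

end Helpers


/-- The generator `ψ̄_i` of the Grassmann (exterior) algebra on `2n` generators. -/
noncomputable def psiBar (R : Type*) [CommRing R] (n : ℕ) (i : Fin n) :
    ExteriorAlgebra R (Fin n ⊕ Fin n → R) :=
  ExteriorAlgebra.ι R (Pi.single (Sum.inl i) 1)

/-- The generator `ψ_j` of the Grassmann (exterior) algebra on `2n` generators. -/
noncomputable def psiVar (R : Type*) [CommRing R] (n : ℕ) (j : Fin n) :
    ExteriorAlgebra R (Fin n ⊕ Fin n → R) :=
  ExteriorAlgebra.ι R (Pi.single (Sum.inr j) 1)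

set_option maxHeartbeats 800000 in
/-- Wick's theorem for complex fermions / the fermionic Gaussian integral:
`(Σ_{i,j} K_{ij} ψ̄_i ψ_j)^n = n! · det K · (ψ̄_1 ψ_1 ψ̄_2 ψ_2 ⋯ ψ̄_n ψ_n)`. -/
theorem grassmann_det_identity (R : Type*) [CommRing R] (n : ℕ) (hn : 1 ≤ n)
    (K : Matrix (Fin n) (Fin n) R) :
    (∑ i : Fin n, ∑ j : Fin n, K i j • (psiBar R n i * psiVar R n j)) ^ n
      = (n.factorial : R) •
          (K.det • ((List.finRange n).map (fun i => psiBar R n i * psiVar R n i)).prod) := by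
  classical
  let vb : Fin n → (Fin n ⊕ Fin n → R) := fun i => Pi.single (Sum.inl i) 1
  let vv : Fin n → (Fin n ⊕ Fin n → R) := fun j => Pi.single (Sum.inr j) 1
  have anti : ∀ u v : (Fin n ⊕ Fin n → R),
      ExteriorAlgebra.ι R u * ExteriorAlgebra.ι R v
        = -(ExteriorAlgebra.ι R v * ExteriorAlgebra.ι R u) :=
    fun u v => eq_neg_of_add_eq_zero_left (ExteriorAlgebra.ι_add_mul_swap u v)
  set Bid : ExteriorAlgebra R (Fin n ⊕ Fin n → R) := ExteriorAlgebra.ιMulti R n vb with hBid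
  set Vid : ExteriorAlgebra R (Fin n ⊕ Fin n → R) := ExteriorAlgebra.ιMulti R n vv with hVid
  set E : ExteriorAlgebra R (Fin n ⊕ Fin n → R) := ((-1 : ℤ) ^ n.choose 2) • (Bid * Vid) with hE
  -- the per-term computation
  have key : ∀ g h : Fin n → Fin n,
      (List.ofFn fun k => K (g k) (h k) • (psiBar R n (g k) * psiVar R n (h k))).prod
        = (∏ k, K (g k) (h k)) • (((-1 : ℤ) ^ n.choose 2) •
            (ExteriorAlgebra.ιMulti R n (vb ∘ g) * ExteriorAlgebra.ιMulti R n (vv ∘ h))) := by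
    intro g h
    have e1 : (List.ofFn fun k => K (g k) (h k) • (psiBar R n (g k) * psiVar R n (h k))).prod
        = (∏ k, K (g k) (h k)) •
            (List.ofFn fun k => psiBar R n (g k) * psiVar R n (h k)).prod :=
      prod_ofFn_smul n _ _
    have e2 : (List.ofFn fun k => psiBar R n (g k) * psiVar R n (h k)).prod
        = ((-1 : ℤ) ^ n.choose 2) • ((List.ofFn fun k => psiBar R n (g k)).prod *
            (List.ofFn fun k => psiVar R n (h k)).prod) :=
      prod_ofFn_mul_anticomm n _ _ (fun k l => anti _ _)
    have e3 : ExteriorAlgebra.ιMulti R n (vb ∘ g)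
        = (List.ofFn fun k => psiBar R n (g k)).prod := ExteriorAlgebra.ιMulti_apply _
    have e4 : ExteriorAlgebra.ιMulti R n (vv ∘ h)
        = (List.ofFn fun k => psiVar R n (h k)).prod := ExteriorAlgebra.ιMulti_apply _
    rw [e1, e2, e3, e4]
  -- vanishing off injective maps
  have hzb : ∀ g : Fin n → Fin n, ¬ Function.Injective g →
      ExteriorAlgebra.ιMulti R n (vb ∘ g) = 0 := by
    intro g hg
    obtain ⟨k, l, hkl, hne⟩ := Function.not_injective_iff.1 hg
    exact AlternatingMap.map_eq_zero_of_eq _ _ (by simp [Function.comp, hkl]) hne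
  have hzv : ∀ h : Fin n → Fin n, ¬ Function.Injective h →
      ExteriorAlgebra.ιMulti R n (vv ∘ h) = 0 := by
    intro h hh
    obtain ⟨k, l, hkl, hne⟩ := Function.not_injective_iff.1 hh
    exact AlternatingMap.map_eq_zero_of_eq _ _ (by simp [Function.comp, hkl]) hne
  -- reducing a sum over all self-maps to a sum over permutations
  have reduce : ∀ (F : (Fin n → Fin n) → ExteriorAlgebra R (Fin n ⊕ Fin n → R)),
      (∀ g, ¬ Function.Injective g → F g = 0) →
      ∑ g : Fin n → Fin n, F g = ∑ σ : Equiv.Perm (Fin n), F ⇑σ := by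
    intro F hF
    have himg : (Finset.univ.filter fun g : Fin n → Fin n => Function.Bijective g)
        = Finset.univ.image (fun σ : Equiv.Perm (Fin n) => ⇑σ) := by
      ext g
      simp only [Finset.mem_filter, Finset.mem_univ, true_and, Finset.mem_image]
      constructor
      · intro hg; exact ⟨Equiv.ofBijective g hg, rfl⟩
      · rintro ⟨σ, -, rfl⟩; exact σ.bijective
    rw [← Finset.sum_filter_of_ne (p := fun g : Fin n → Fin n => Function.Bijective g)
        (fun g _ hne => by
          by_contra hb
          exact hne (hF g (fun hinj => hb (Finite.injective_iff_bijective.1 hinj)))),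
      himg, Finset.sum_image (fun σ _ τ _ hc => Equiv.coe_fn_injective hc)]
  -- the scalar coefficient attached to a pair of permutations
  have sm : ∀ (u v : ℤˣ) (x y : ExteriorAlgebra R (Fin n ⊕ Fin n → R)),
      (u • x) * (v • y) = ((u * v : ℤˣ) : ℤ) • (x * y) := by
    intro u v x y
    rw [Units.smul_def, Units.smul_def, smul_mul_assoc, mul_smul_comm, smul_smul]
    norm_cast
  have term_eq : ∀ σ τ : Equiv.Perm (Fin n),
      (∏ k, K (σ k) (τ k)) • (((-1 : ℤ) ^ n.choose 2) •
          (ExteriorAlgebra.ιMulti R n (vb ∘ ⇑σ) * ExteriorAlgebra.ιMulti R n (vv ∘ ⇑τ)))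
        = ((∏ k, K (σ k) (τ k)) *
            (((Equiv.Perm.sign σ * Equiv.Perm.sign τ : ℤˣ) : ℤ) : R)) • E := by
    intro σ τ
    rw [(ExteriorAlgebra.ιMulti R n).map_perm vb σ, (ExteriorAlgebra.ιMulti R n).map_perm vv τ, sm,
      smul_comm ((-1 : ℤ) ^ n.choose 2), ← hE,
      ← Int.cast_smul_eq_zsmul R, smul_smul]
  -- the scalar sum equals n! · det K
  have inner : ∀ σ : Equiv.Perm (Fin n),
      (∑ τ : Equiv.Perm (Fin n), (∏ k, K (σ k) (τ k)) *
          (((Equiv.Perm.sign σ * Equiv.Perm.sign τ : ℤˣ) : ℤ) : R)) = K.det := by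
    intro σ
    calc (∑ τ : Equiv.Perm (Fin n), (∏ k, K (σ k) (τ k)) *
            (((Equiv.Perm.sign σ * Equiv.Perm.sign τ : ℤˣ) : ℤ) : R))
        = ∑ ρ : Equiv.Perm (Fin n), (∏ k, K (σ k) ((ρ * σ) k)) *
            (((Equiv.Perm.sign σ * Equiv.Perm.sign (ρ * σ) : ℤˣ) : ℤ) : R) :=
          (Equiv.sum_comp (Equiv.mulRight σ) _).symm
      _ = ∑ ρ : Equiv.Perm (Fin n), (((Equiv.Perm.sign ρ : ℤ) : R)) * ∏ i, K i (ρ i) := by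
          refine Finset.sum_congr rfl fun ρ _ => ?_
          have h1 : (Equiv.Perm.sign σ * Equiv.Perm.sign (ρ * σ) : ℤˣ)
              = Equiv.Perm.sign ρ := by
            rw [Equiv.Perm.sign_mul, mul_comm (Equiv.Perm.sign ρ), ← mul_assoc,
              Int.units_mul_self, one_mul]
          have h2 : ∏ k, K (σ k) ((ρ * σ) k) = ∏ i, K i (ρ i) := by
            simpa [Equiv.Perm.mul_apply] using Equiv.prod_comp σ (fun i => K i (ρ i))
          rw [h1, h2, mul_comm]
      _ = K.det := by
          rw [← Matrix.det_transpose K, Matrix.det_apply']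
          exact Finset.sum_congr rfl fun ρ _ => by simp [Matrix.transpose_apply]
  -- the right-hand side product
  have hRHS : ((List.finRange n).map (fun i => psiBar R n i * psiVar R n i)).prod = E := by
    rw [← List.ofFn_eq_map]
    have e2 : (List.ofFn fun i => psiBar R n i * psiVar R n i).prod
        = ((-1 : ℤ) ^ n.choose 2) •
            ((List.ofFn fun i => psiBar R n i).prod * (List.ofFn fun i => psiVar R n i).prod) :=
      prod_ofFn_mul_anticomm n _ _ (fun k l => anti _ _)
    have e3 : Bid = (List.ofFn fun i => psiBar R n i).prod := ExteriorAlgebra.ιMulti_apply _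
    have e4 : Vid = (List.ofFn fun i => psiVar R n i).prod := ExteriorAlgebra.ιMulti_apply _
    rw [e2, hE, e3, e4]
  -- assemble everything
  calc (∑ i : Fin n, ∑ j : Fin n, K i j • (psiBar R n i * psiVar R n j)) ^ n
      = (∑ p : Fin n × Fin n, K p.1 p.2 • (psiBar R n p.1 * psiVar R n p.2)) ^ n := by
        rw [Fintype.sum_prod_type]
    _ = ∑ f : Fin n → Fin n × Fin n, (List.ofFn fun k =>
          K (f k).1 (f k).2 • (psiBar R n (f k).1 * psiVar R n (f k).2)).prod :=
        sum_pow_ofFn _ n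
    _ = ∑ gh : (Fin n → Fin n) × (Fin n → Fin n), (List.ofFn fun k =>
          K (gh.1 k) (gh.2 k) • (psiBar R n (gh.1 k) * psiVar R n (gh.2 k))).prod :=
        Fintype.sum_equiv (Equiv.arrowProdEquivProdArrow _ _ _) _ _ (fun f => rfl)
    _ = ∑ g : Fin n → Fin n, ∑ h : Fin n → Fin n, (List.ofFn fun k =>
          K (g k) (h k) • (psiBar R n (g k) * psiVar R n (h k))).prod :=
        Fintype.sum_prod_type _
    _ = ∑ g : Fin n → Fin n, ∑ h : Fin n → Fin n, (∏ k, K (g k) (h k)) •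
          (((-1 : ℤ) ^ n.choose 2) •
            (ExteriorAlgebra.ιMulti R n (vb ∘ g) * ExteriorAlgebra.ιMulti R n (vv ∘ h))) :=
        Finset.sum_congr rfl fun g _ => Finset.sum_congr rfl fun h _ => key g h
    _ = ∑ σ : Equiv.Perm (Fin n), ∑ h : Fin n → Fin n, (∏ k, K (σ k) (h k)) •
          (((-1 : ℤ) ^ n.choose 2) •
            (ExteriorAlgebra.ιMulti R n (vb ∘ ⇑σ) * ExteriorAlgebra.ιMulti R n (vv ∘ h))) := by
        refine reduce _ (fun g hg => Finset.sum_eq_zero fun h _ => ?_)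
        rw [hzb g hg, zero_mul, smul_zero, smul_zero]
    _ = ∑ σ : Equiv.Perm (Fin n), ∑ τ : Equiv.Perm (Fin n), (∏ k, K (σ k) (τ k)) •
          (((-1 : ℤ) ^ n.choose 2) •
            (ExteriorAlgebra.ιMulti R n (vb ∘ ⇑σ) * ExteriorAlgebra.ιMulti R n (vv ∘ ⇑τ))) := by
        refine Finset.sum_congr rfl fun σ _ => ?_
        refine reduce _ (fun h hh => ?_)
        rw [hzv h hh, mul_zero, smul_zero, smul_zero]
    _ = ∑ σ : Equiv.Perm (Fin n), ∑ τ : Equiv.Perm (Fin n), ((∏ k, K (σ k) (τ k)) *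
          (((Equiv.Perm.sign σ * Equiv.Perm.sign τ : ℤˣ) : ℤ) : R)) • E :=
        Finset.sum_congr rfl fun σ _ => Finset.sum_congr rfl fun τ _ => term_eq σ τ
    _ = (∑ σ : Equiv.Perm (Fin n), ∑ τ : Equiv.Perm (Fin n), (∏ k, K (σ k) (τ k)) *
          (((Equiv.Perm.sign σ * Equiv.Perm.sign τ : ℤˣ) : ℤ) : R)) • E := by
        simp only [Finset.sum_smul]
    _ = ((n.factorial : R) * K.det) • E := by
        rw [Finset.sum_congr rfl (fun σ _ => inner σ), Finset.sum_const, Finset.card_univ,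
          Fintype.card_perm, Fintype.card_fin, nsmul_eq_mul]
    _ = (n.factorial : R) •
          (K.det • ((List.finRange n).map (fun i => psiBar R n i * psiVar R n i)).prod) := by
        rw [hRHS, smul_smul]
end

section
/- Let R be a commutative ring, let g, N be natural numbers and p an integer, let y ∈ R and x : Fin g → R. Then, with the convention that the binomial coefficient C(N, t) is zero when t < 0 or t > N, Σ_{I ⊆ Fin g} C(N, p − |I|) · Π_{l ∉ I} (y − x_l) = Σ_{k=0}^{g} C(N, p − g + k) · Σ_{F ⊆ Fin g} (−1)^{|F|} · (Π_{l ∈ F} x_l) · y^{k−|F|} · C(g − |F|, k − |F|), where on the right the summand vanishes unless |F| ≤ k (as then C(g−|F|, k−|F|) = 0). -/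
open BigOperators Finset

/-- The binomial coefficient `C(N, t)` with an integer lower argument, with the
convention that it vanishes whenever `t < 0` (and, as usual, whenever `t > N`). -/
def zchoose (N : ℕ) (t : ℤ) : ℕ := if 0 ≤ t then N.choose t.toNat else 0

lemma zchoose_ofNat (n j : ℕ) : zchoose n (j : ℤ) = n.choose j := by
  simp [zchoose]

lemma zchoose_neg (n : ℕ) {t : ℤ} (h : t < 0) : zchoose n t = 0 := by
  simp [zchoose, not_le.2 h]

lemma grr_inner {R : Type*} [CommRing R] (N g m : ℕ) (hm : m ≤ g) (p : ℤ) (y : R) :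
    ∑ k ∈ Finset.range (g + 1),
        ((zchoose N (p - g + k) : ℕ) : R) * y ^ (k - m) *
          ((zchoose (g - m) ((k : ℤ) - m) : ℕ) : R)
      = ∑ j ∈ Finset.range (g - m + 1),
          (((g - m).choose j : ℕ) : R) * ((zchoose N (p - g + m + j) : ℕ) : R) * y ^ j := by
  have split : Finset.range (g + 1) = Finset.Ico 0 m ∪ Finset.Ico m (g + 1) := by
    rw [Finset.Ico_union_Ico_eq_Ico (Nat.zero_le _) (by omega), Finset.range_eq_Ico]
  rw [split, Finset.sum_union (Finset.Ico_disjoint_Ico_consecutive 0 m (g + 1))]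
  have h0 : ∑ k ∈ Finset.Ico 0 m,
      ((zchoose N (p - g + k) : ℕ) : R) * y ^ (k - m) *
        ((zchoose (g - m) ((k : ℤ) - m) : ℕ) : R) = 0 := by
    refine Finset.sum_eq_zero fun k hk => ?_
    rw [Finset.mem_Ico] at hk
    rw [zchoose_neg (g - m) (show (k : ℤ) - m < 0 by omega)]
    simp
  rw [h0, zero_add, Finset.sum_Ico_eq_sum_range]
  have hrange : g + 1 - m = g - m + 1 := by omega
  rw [hrange]
  refine Finset.sum_congr rfl fun j hj => ?_
  have h1 : ((m + j : ℕ) : ℤ) - m = (j : ℤ) := by push_cast; ring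
  have h2 : m + j - m = j := by omega
  have h3 : (p - g + (m + j : ℕ) : ℤ) = p - g + m + j := by push_cast; ring
  rw [h1, h2, h3, zchoose_ofNat]
  ring


/-- The combinatorial rearrangement identity used in the Grothendieck–Riemann–Roch
computation of the Chern character of the Laughlin quasihole bundle:
`Σ_{I ⊆ [g]} C(N, p−|I|) Π_{l∉I} (y − x_l)
  = Σ_{k=0}^{g} C(N, p−g+k) Σ_{F ⊆ [g]} (−1)^{|F|} (Π_{l∈F} x_l) y^{k−|F|} C(g−|F|, k−|F|)`,
where the summand on the right vanishes unless `|F| ≤ k` (since then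
`C(g−|F|, k−|F|) = 0`). -/
theorem grr_rearrangement_identity (R : Type*) [CommRing R] (g N : ℕ) (p : ℤ)
    (y : R) (x : Fin g → R) :
    ∑ I ∈ (Finset.univ : Finset (Fin g)).powerset,
        ((zchoose N (p - I.card) : ℕ) : R) * ∏ l ∈ Iᶜ, (y - x l)
      = ∑ k ∈ Finset.range (g + 1),
          ((zchoose N (p - g + k) : ℕ) : R) *
            ∑ F ∈ (Finset.univ : Finset (Fin g)).powerset,
              (-1 : R) ^ F.card * (∏ l ∈ F, x l) * y ^ (k - F.card) *
                ((zchoose (g - F.card) ((k : ℤ) - F.card) : ℕ) : R) := by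
  classical
  have hcard : ∀ F : Finset (Fin g), F.card ≤ g := fun F => by
    simpa using F.card_le_univ
  set S : R := ∑ F ∈ (Finset.univ : Finset (Fin g)).powerset,
      (-1 : R) ^ F.card * (∏ l ∈ F, x l) *
        ∑ j ∈ Finset.range (g - F.card + 1),
          (((g - F.card).choose j : ℕ) : R) *
            ((zchoose N (p - g + F.card + j) : ℕ) : R) * y ^ j with hS
  have hL : ∑ I ∈ (Finset.univ : Finset (Fin g)).powerset,
      ((zchoose N (p - I.card) : ℕ) : R) * ∏ l ∈ Iᶜ, (y - x l) = S := by
    have expand : ∀ I : Finset (Fin g),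
        ∏ l ∈ Iᶜ, (y - x l)
          = ∑ F ∈ (Iᶜ).powerset, ((-1 : R) ^ F.card * ∏ l ∈ F, x l) * y ^ ((Iᶜ \ F).card) := by
      intro I
      have h : ∀ l ∈ Iᶜ, y - x l = -x l + y := fun l _ => by ring
      rw [Finset.prod_congr rfl h, Finset.prod_add]
      refine Finset.sum_congr rfl fun F _ => ?_
      rw [Finset.prod_const]
      congr 1
      have : ∏ l ∈ F, -x l = (∏ _l ∈ F, (-1 : R)) * ∏ l ∈ F, x l := by
        rw [← Finset.prod_mul_distrib]
        exact Finset.prod_congr rfl fun l _ => by ring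
      rw [this, Finset.prod_const]
    calc ∑ I ∈ (Finset.univ : Finset (Fin g)).powerset,
          ((zchoose N (p - I.card) : ℕ) : R) * ∏ l ∈ Iᶜ, (y - x l)
        = ∑ I ∈ (Finset.univ : Finset (Fin g)).powerset,
            ∑ F ∈ (Iᶜ).powerset, ((zchoose N (p - I.card) : ℕ) : R) *
              (((-1 : R) ^ F.card * ∏ l ∈ F, x l) * y ^ ((Iᶜ \ F).card)) := by
          refine Finset.sum_congr rfl fun I _ => ?_
          rw [expand I, Finset.mul_sum]
      _ = ∑ F ∈ (Finset.univ : Finset (Fin g)).powerset,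
            ∑ I ∈ (Fᶜ).powerset, ((zchoose N (p - I.card) : ℕ) : R) *
              (((-1 : R) ^ F.card * ∏ l ∈ F, x l) * y ^ ((Iᶜ \ F).card)) := by
          refine Finset.sum_comm' fun I F => ?_
          simp only [Finset.mem_powerset, Finset.subset_univ, true_and, and_true]
          exact Finset.subset_compl_comm
      _ = S := by
          rw [hS]
          refine Finset.sum_congr rfl fun F hF => ?_
          have hFg : F.card ≤ g := hcard F
          have step1 : ∑ I ∈ (Fᶜ).powerset, ((zchoose N (p - I.card) : ℕ) : R) *
              (((-1 : R) ^ F.card * ∏ l ∈ F, x l) * y ^ ((Iᶜ \ F).card))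
            = ((-1 : R) ^ F.card * ∏ l ∈ F, x l) *
              ∑ I ∈ (Fᶜ).powerset,
                ((zchoose N (p - I.card) : ℕ) : R) * y ^ (g - I.card - F.card) := by
            rw [Finset.mul_sum]
            refine Finset.sum_congr rfl fun I hI => ?_
            have hsub : F ⊆ Iᶜ := Finset.subset_compl_comm.mp (Finset.mem_powerset.mp hI)
            have hc : (Iᶜ \ F).card = g - I.card - F.card := by
              rw [Finset.card_sdiff_of_subset hsub, Finset.card_compl]
              simp
            rw [hc]; ring
          rw [step1]
          congr 1
          rw [Finset.sum_powerset_apply_card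
            (f := fun n => ((zchoose N (p - n) : ℕ) : R) * y ^ (g - n - F.card)) (x := Fᶜ)]
          have hc : (Fᶜ).card = g - F.card := by rw [Finset.card_compl]; simp
          rw [hc, ← Finset.sum_range_reflect
            (fun n => (g - F.card).choose n • (((zchoose N (p - n) : ℕ) : R) * y ^ (g - n - F.card)))
            (g - F.card + 1)]
          refine Finset.sum_congr rfl fun j hj => ?_
          rw [Finset.mem_range, Nat.lt_succ_iff] at hj
          simp only [Nat.add_sub_cancel]
          have h1 : (g - F.card).choose (g - F.card - j) = (g - F.card).choose j :=
            Nat.choose_symm hj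
          have h2 : (p - ((g - F.card - j : ℕ) : ℤ)) = p - g + F.card + j := by
            have : ((g - F.card - j : ℕ) : ℤ) = (g : ℤ) - F.card - j := by omega
            rw [this]; ring
          have h3 : g - (g - F.card - j) - F.card = j := by omega
          rw [h1, h2, h3, nsmul_eq_mul]
          ring
  have hR : ∑ k ∈ Finset.range (g + 1),
      ((zchoose N (p - g + k) : ℕ) : R) *
        ∑ F ∈ (Finset.univ : Finset (Fin g)).powerset,
          (-1 : R) ^ F.card * (∏ l ∈ F, x l) * y ^ (k - F.card) *
            ((zchoose (g - F.card) ((k : ℤ) - F.card) : ℕ) : R) = S := by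
    calc ∑ k ∈ Finset.range (g + 1),
          ((zchoose N (p - g + k) : ℕ) : R) *
            ∑ F ∈ (Finset.univ : Finset (Fin g)).powerset,
              (-1 : R) ^ F.card * (∏ l ∈ F, x l) * y ^ (k - F.card) *
                ((zchoose (g - F.card) ((k : ℤ) - F.card) : ℕ) : R)
        = ∑ k ∈ Finset.range (g + 1),
            ∑ F ∈ (Finset.univ : Finset (Fin g)).powerset,
              ((zchoose N (p - g + k) : ℕ) : R) *
                ((-1 : R) ^ F.card * (∏ l ∈ F, x l) * y ^ (k - F.card) *
                  ((zchoose (g - F.card) ((k : ℤ) - F.card) : ℕ) : R)) := by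
          exact Finset.sum_congr rfl fun k _ => Finset.mul_sum _ _ _
      _ = ∑ F ∈ (Finset.univ : Finset (Fin g)).powerset,
            ∑ k ∈ Finset.range (g + 1),
              ((zchoose N (p - g + k) : ℕ) : R) *
                ((-1 : R) ^ F.card * (∏ l ∈ F, x l) * y ^ (k - F.card) *
                  ((zchoose (g - F.card) ((k : ℤ) - F.card) : ℕ) : R)) := Finset.sum_comm
      _ = S := by
          rw [hS]
          refine Finset.sum_congr rfl fun F hF => ?_
          have hFg : F.card ≤ g := hcard F
          have step : ∑ k ∈ Finset.range (g + 1),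
              ((zchoose N (p - g + k) : ℕ) : R) *
                ((-1 : R) ^ F.card * (∏ l ∈ F, x l) * y ^ (k - F.card) *
                  ((zchoose (g - F.card) ((k : ℤ) - F.card) : ℕ) : R))
            = ((-1 : R) ^ F.card * ∏ l ∈ F, x l) *
              ∑ k ∈ Finset.range (g + 1),
                ((zchoose N (p - g + k) : ℕ) : R) * y ^ (k - F.card) *
                  ((zchoose (g - F.card) ((k : ℤ) - F.card) : ℕ) : R) := by
            rw [Finset.mul_sum]
            exact Finset.sum_congr rfl fun k _ => by ring
          rw [step, grr_inner N g F.card hFg p y]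
  rw [hL, hR]
end

section
/- Let τ ∈ ℂ with Im τ > 0, let b ≥ 1, n ≥ 1, m ≥ 0 be integers, and let 0 ≤ l ≤ b−1. Define s̃_l : ℂⁿ × ℂᵐ → ℂ by s̃_l(z, w) = θ[l/b, 0](b·Σ_{μ=1}^n z_μ + Σ_{γ=1}^m w_γ, bτ). Then for every 1 ≤ γ ≤ m, s̃_l(z, w + τ·e_γ) = exp(−πiτ/b) · exp(−(2πi/b)(b·Σ_μ z_μ + Σ_δ w_δ)) · s̃_{l+1}(z, w), where e_γ is the γ-th standard basis vector of ℂᵐ and s̃_b is interpreted as the function built from θ[1,0], which equals θ[0,0]. -/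
open Complex BigOperators Finset

/-- The center-of-mass theta factor of the genus-one Laughlin states:
`s̃_l(z, w) = θ[l/b, 0](b·Σ_μ z_μ + Σ_γ w_γ, bτ)`. -/
noncomputable def sTilde (b n m : ℕ) (l : ℕ) (τ : ℂ)
    (z : Fin n → ℂ) (w : Fin m → ℂ) : ℂ :=
  thetaChar ((l : ℝ) / (b : ℝ)) 0 ((b : ℂ) * ∑ μ, z μ + ∑ γ, w γ) ((b : ℂ) * τ)

/-- Transformation of the center-of-mass factor under `w_γ ↦ w_γ + τ`:
`s̃_l(z, w + τe_γ) = exp(−πiτ/b) exp(−(2πi/b)(bΣz + Σw)) s̃_{l+1}(z, w)`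
(with `s̃_b` built from `θ[1,0] = θ[0,0]`). -/
theorem sTilde_shift_tau (τ : ℂ) (hτ : 0 < τ.im) (b n m : ℕ) (hb : 1 ≤ b) (hn : 1 ≤ n)
    (l : ℕ) (hl : l ≤ b - 1) (z : Fin n → ℂ) (w : Fin m → ℂ) (γ : Fin m) :
    sTilde b n m l τ z (w + Pi.single γ τ) =
      Complex.exp (-(Real.pi * Complex.I * τ / (b : ℂ))) *
        Complex.exp (-(2 * Real.pi * Complex.I / (b : ℂ)) *
          ((b : ℂ) * ∑ μ, z μ + ∑ δ, w δ)) *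
        sTilde b n m (l + 1) τ z w := by
  have hb0 : (b : ℂ) ≠ 0 := by
    exact_mod_cast Nat.one_le_iff_ne_zero.mp hb
  unfold sTilde thetaChar
  have hsum : ∑ δ, (w + Pi.single γ τ : Fin m → ℂ) δ = (∑ δ, w δ) + τ := by
    simp [Finset.sum_add_distrib, Finset.sum_pi_single]
  rw [hsum, ← Complex.exp_add, ← tsum_mul_left]
  congr 1
  funext k
  rw [← Complex.exp_add]
  congr 1
  push_cast
  field_simp
  ring
end
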